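/- arXiv:2506.21128 — 4 statements merged into one kernel-verified Lean document; each statement's English description precedes it below -/
import Mathlib

section
/- Let M be a tractable metric space and A ⊆ M a subspace. Then A (with the induced metric) is tractable if and only if A is closed in M. -/
open Metric TopologicalSpace Filter Topology Bornology
open scoped ENNReal NNReal

/-- The similarity matrix of a finite subset of a metric space. -/
noncomputable def simMatrix {X : Type*} [MetricSpace X] (s : Finset X) : Matrix s s ℝ :=
  fun i j => Real.exp (-dist (i : X) (j : X))

/-- A metric space is positive definite when every finite subspace has a positive
definite similarity matrix. -/
def IsPosDefSpace (X : Type*) [MetricSpace X] : Prop :=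
  ∀ s : Finset X, (simMatrix s).PosDef

/-- The magnitude of a finite subset of a metric space: the sum of the entries of the
inverse of its similarity matrix. -/
noncomputable def finMag {X : Type*} [MetricSpace X] (s : Finset X) : ℝ :=
  letI : DecidableEq X := Classical.decEq X
  ∑ i, ∑ j, (simMatrix s)⁻¹ i j

/-- The magnitude of a (compact) subset of a metric space, valued in `[0, ∞]`:
the supremum of the magnitudes of its finite subsets. -/
noncomputable def cMagE {X : Type*} [MetricSpace X] (K : Set X) : ℝ≥0∞ :=
  ⨆ (s : Finset X) (_ : (s : Set X) ⊆ K), ENNReal.ofReal (finMag s)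

/-- The real-valued magnitude of a (compact) subset of a metric space. -/
noncomputable def cMag {X : Type*} [MetricSpace X] (K : Set X) : ℝ :=
  (cMagE K).toReal

/-- A metric space is tractable when it is positive definite and all of its closed balls
are compact and of finite magnitude. -/
def Tractable (X : Type*) [MetricSpace X] : Prop :=
  IsPosDefSpace X ∧ (∀ (x : X) (r : ℝ), IsCompact (closedBall x r)) ∧
    ∀ (x : X) (r : ℝ), cMagE (closedBall x r) < ⊤

/- A subspace whose closed balls are compact is a proper, hence complete, space, so it is
closed. Conversely a closed subspace of a proper space is proper, and since the inclusion is an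
isometry, every finite subset of the subspace has the same similarity matrix (up to reindexing),
hence the same magnitude, as its image: positive definiteness and finiteness of the magnitude of
balls are inherited from the ambient space. -/

lemma cMagE_mono {X : Type*} [MetricSpace X] {K L : Set X} (h : K ⊆ L) : cMagE K ≤ cMagE L :=
  iSup_mono fun _ => iSup_mono' fun hs => ⟨hs.trans h, le_rfl⟩

lemma IsClosed.of_properSpace_subtype {X : Type*} [MetricSpace X] {A : Set X}
    [ProperSpace A] : IsClosed A :=
  (completeSpace_coe_iff_isComplete.mp inferInstance).isClosed

namespace Isometry

variable {X Y : Type*} [MetricSpace X] [MetricSpace Y] {f : X → Y} (hf : Isometry f)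
include hf

lemma simMatrix_map (s : Finset X) :
    simMatrix s = (simMatrix (s.map ⟨f, hf.injective⟩)).submatrix
      (s.equivMap ⟨f, hf.injective⟩) (s.equivMap ⟨f, hf.injective⟩) := by
  ext i j
  simp [simMatrix, hf.dist_eq]

lemma finMag_map (s : Finset X) : finMag (s.map ⟨f, hf.injective⟩) = finMag s := by
  classical
  rw [finMag, finMag, hf.simMatrix_map s, Matrix.inv_submatrix_equiv]
  simp only [Matrix.submatrix_apply]
  rw [← (s.equivMap ⟨f, hf.injective⟩).sum_comp]
  exact Finset.sum_congr rfl fun i _ => ((s.equivMap _).sum_comp _).symm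

lemma isPosDefSpace (hY : IsPosDefSpace Y) : IsPosDefSpace X := fun s => by
  rw [hf.simMatrix_map s]
  exact (hY _).submatrix (Equiv.injective _)

lemma cMagE_le_image (K : Set X) : cMagE K ≤ cMagE (f '' K) :=
  iSup₂_le fun s hs => by
    rw [← hf.finMag_map s]
    refine le_iSup₂_of_le (s.map ⟨f, hf.injective⟩) ?_ le_rfl
    simpa using Set.image_mono hs

lemma tractable [ProperSpace X] (hY : Tractable Y) : Tractable X := by
  obtain ⟨hpd, -, hmag⟩ := hY
  refine ⟨hf.isPosDefSpace hpd, isCompact_closedBall, fun x r => ?_⟩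
  calc cMagE (closedBall x r) ≤ cMagE (f '' closedBall x r) := hf.cMagE_le_image _
    _ ≤ cMagE (closedBall (f x) r) := cMagE_mono (hf.mapsTo_closedBall x r).image_subset
    _ < ⊤ := hmag (f x) r

end Isometry

/-- A subspace of a tractable metric space is tractable iff it is closed. -/
theorem stmt_4 {M : Type*} [MetricSpace M] (hM : Tractable M) (A : Set M) :
    Tractable A ↔ IsClosed A := by
  constructor
  · rintro ⟨-, hball, -⟩
    have : ProperSpace A := ⟨hball⟩
    exact IsClosed.of_properSpace_subtype
  · intro hA
    have : ProperSpace M := ⟨hM.2.1⟩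
    have := ProperSpace.of_isClosed hA
    exact isometry_subtype_coe.tractable hM
end

section
/- Let M be a tractable metric space. Then the following are equivalent: (i) the magnitude map on nonempty compact subsets of M (with the Hausdorff metric) is continuous; (ii) for every bounded subset B ⊆ M, the magnitude map on nonempty finite subsets of B is uniformly continuous; (iii) for every x ∈ M and r > 0, the magnitude map on nonempty finite subsets of the closed ball of radius r about x is uniformly continuous. Moreover, if these hold, then the magnitude map on nonempty finite subsets of M is continuous. -/
/-!
Since closed balls are compact, `M` is proper. Then for bounded `B` the nonempty compact subsets
of `B` lie in the compact hyperspace of subsets of the closure of `B`, where a continuous map is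
uniformly continuous: (i) ⇒ (ii). Conversely, a compact `K` is Hausdorff-approximated by finite
`F ⊆ K` with `mg(F)` arbitrarily close to `mg(K)`: take a fine net of `K` together with a finite
set nearly attaining the supremum defining `mg(K)`, and use monotonicity of magnitude. All compact
sets Hausdorff-close to `K` lie in one closed ball, on whose finite subsets magnitude is uniformly
continuous, so an `ε/3` argument gives continuity at `K`: (iii) ⇒ (i).
-/

open Metric TopologicalSpace Filter Topology Bornology
open scoped ENNReal NNReal

section Topology

variable {X Y : Type*} [PseudoMetricSpace X] [PseudoMetricSpace Y]

theorem continuousAt_of_uniformContinuousOn_of_approx {f : X → Y} {D U : Set X} {x : X}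
    (hU : U ∈ 𝓝 x) (hf : UniformContinuousOn f (D ∩ U))
    (happrox : ∀ y ∈ U, ∀ η > 0, ∃ z ∈ D, dist z y < η ∧ dist (f z) (f y) < η) :
    ContinuousAt f x := by
  obtain ⟨r, hr, hrU⟩ := Metric.mem_nhds_iff.1 hU
  refine Metric.continuousAt_iff.2 fun ε hε => ?_
  obtain ⟨δ, hδ, hfδ⟩ := Metric.uniformContinuousOn_iff.1 hf (ε / 3) (by positivity)
  set ρ := min (r / 2) (δ / 3)
  have hρr : ρ ≤ r / 2 := min_le_left _ _
  have hρδ : ρ ≤ δ / 3 := min_le_right _ _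
  refine ⟨ρ, by positivity, fun {y} hy => ?_⟩
  set η := min ρ (ε / 3)
  have hηρ : η ≤ ρ := min_le_left _ _
  have hηε : η ≤ ε / 3 := min_le_right _ _
  obtain ⟨z, hzD, hzy, hfzy⟩ := happrox y (hrU (mem_ball.2 (by linarith))) η (by positivity)
  obtain ⟨w, hwD, hwx, hfwx⟩ := happrox x (mem_of_mem_nhds hU) η (by positivity)
  have hzU : z ∈ U := hrU (mem_ball.2 (by linarith [dist_triangle z y x]))
  have hwU : w ∈ U := hrU (mem_ball.2 (by linarith))
  have hzw : dist (f z) (f w) < ε / 3 := hfδ z ⟨hzD, hzU⟩ w ⟨hwD, hwU⟩ (by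
    linarith [dist_triangle4 z y x w, dist_comm x w])
  calc dist (f y) (f x) ≤ dist (f y) (f z) + dist (f z) (f w) + dist (f w) (f x) :=
        dist_triangle4 _ _ _ _
    _ < ε := by linarith [dist_comm (f y) (f z)]

end Topology

namespace TopologicalSpace.NonemptyCompacts

variable {M : Type*} [MetricSpace M]

theorem isCompact_setOf_subset [CompleteSpace M] {S : Set M} (hS : IsCompact S) :
    IsCompact {K : NonemptyCompacts M | (K : Set M) ⊆ S} :=
  letI := UniformSpace.hausdorff M
  (totallyBounded_subsets_of_totallyBounded hS.totallyBounded).isCompact_of_isClosed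
    (hS.isClosed.powerset_hausdorff.preimage uniformContinuous_coe.continuous)

theorem setOf_subset_closedBall_mem_nhds {K₀ : NonemptyCompacts M} {x : M} {R r : ℝ}
    (hK₀ : (K₀ : Set M) ⊆ closedBall x R) (hr : 0 < r) :
    {K : NonemptyCompacts M | (K : Set M) ⊆ closedBall x (R + r)} ∈ 𝓝 K₀ := by
  refine Metric.mem_nhds_iff.2 ⟨r, hr, fun K hK y hy => ?_⟩
  obtain ⟨z, hz, hyz⟩ := exists_dist_lt_of_hausdorffDist_lt hy (mem_ball.1 hK)
    (hausdorffEDist_ne_top_of_nonempty_of_bounded K.nonempty K₀.nonempty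
      K.isCompact.isBounded K₀.isCompact.isBounded)
  exact mem_closedBall.2 (by linarith [dist_triangle y z x, mem_closedBall.1 (hK₀ hz)])

end TopologicalSpace.NonemptyCompacts

section Magnitude

variable {M : Type*} [MetricSpace M]

theorem cMagE_mono_s13 {s t : Set M} (h : s ⊆ t) : cMagE s ≤ cMagE t :=
  iSup₂_le fun F hF => le_iSup₂_of_le F (hF.trans h) le_rfl

theorem ofReal_finMag_le_cMagE {F : Finset M} {s : Set M} (h : (F : Set M) ⊆ s) :
    ENNReal.ofReal (finMag F) ≤ cMagE s :=
  le_iSup₂_of_le F h le_rfl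

theorem Tractable.cMagE_ne_top (hM : Tractable M) (K : NonemptyCompacts M) :
    cMagE (K : Set M) ≠ ⊤ := by
  obtain ⟨x, -⟩ := K.nonempty
  obtain ⟨r, hr⟩ := K.isCompact.isBounded.subset_closedBall x
  exact ((cMagE_mono_s13 hr).trans_lt (hM.2.2 x r)).ne

theorem exists_finset_subset_cMagE_lt_ofReal_finMag_add {K : Set M} (hK : cMagE K ≠ ⊤)
    {ε : ℝ} (hε : 0 < ε) :
    ∃ F : Finset M, (F : Set M) ⊆ K ∧
      cMagE K < ENNReal.ofReal (finMag F) + ENNReal.ofReal ε := by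
  have hlt : cMagE K < cMagE K + ENNReal.ofReal ε :=
    ENNReal.lt_add_right hK (ENNReal.ofReal_pos.2 hε).ne'
  rw [cMagE, ENNReal.biSup_add' ⟨∅, by simp⟩] at hlt
  conv_lhs at hlt => rw [← cMagE]
  obtain ⟨F, hF⟩ := lt_iSup_iff.1 hlt
  obtain ⟨hFK, hlt'⟩ := lt_iSup_iff.1 hF
  exact ⟨F, hFK, hlt'⟩

theorem TopologicalSpace.NonemptyCompacts.exists_finite_dist_lt_and_dist_cMag_lt
    (K : NonemptyCompacts M) (hK : cMagE (K : Set M) ≠ ⊤) {η : ℝ} (hη : 0 < η) :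
    ∃ F : NonemptyCompacts M, (F : Set M).Finite ∧ dist F K < η ∧
      dist (cMag (F : Set M)) (cMag (K : Set M)) < η := by
  obtain ⟨F₀, hF₀K, hF₀⟩ := exists_finset_subset_cMagE_lt_ofReal_finMag_add hK hη
  obtain ⟨t, htK, ht, hcover⟩ := K.isCompact.finite_cover_balls (half_pos hη)
  -- a finite `η/2`-net of `K`, enlarged by `F₀` so that its magnitude is nearly that of `K`
  set T : Set M := ↑F₀ ∪ t
  have hTK : T ⊆ K := Set.union_subset hF₀K htK
  have hKT : ∀ x ∈ (K : Set M), ∃ y ∈ T, dist x y ≤ η / 2 := fun x hx => by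
    obtain ⟨y, hy, hxy⟩ := Set.mem_iUnion₂.1 (hcover hx)
    exact ⟨y, Or.inr hy, (mem_ball.1 hxy).le⟩
  have hT : T.Nonempty := by
    obtain ⟨x, hx⟩ := K.nonempty
    obtain ⟨y, hy, -⟩ := hKT x hx
    exact ⟨y, hy⟩
  have hTfin : T.Finite := F₀.finite_toSet.union ht
  refine ⟨⟨⟨T, hTfin.isCompact⟩, hT⟩, hTfin, ?_, ?_⟩
  · exact lt_of_le_of_lt (hausdorffDist_le_of_mem_dist (half_pos hη).le
      (fun x hx => ⟨x, hTK hx, by simpa using (half_pos hη).le⟩) hKT) (half_lt_self hη)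
  · have hTle : cMagE T ≤ cMagE (K : Set M) := cMagE_mono_s13 hTK
    have hTne : cMagE T ≠ ⊤ := ne_top_of_le_ne_top hK hTle
    have hKlt : cMagE (K : Set M) < cMagE T + ENNReal.ofReal η :=
      hF₀.trans_le (add_le_add_left (ofReal_finMag_le_cMagE Set.subset_union_left) _)
    have h₁ : cMag (K : Set M) < cMag T + η := by
      have := ENNReal.toReal_strict_mono
        (ENNReal.add_ne_top.2 ⟨hTne, ENNReal.ofReal_ne_top⟩) hKlt
      rwa [ENNReal.toReal_add hTne ENNReal.ofReal_ne_top, ENNReal.toReal_ofReal hη.le] at this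
    have h₂ : cMag T ≤ cMag (K : Set M) := ENNReal.toReal_mono hK hTle
    change dist (cMag T) (cMag (K : Set M)) < η
    rw [Real.dist_eq, abs_sub_lt_iff]
    constructor <;> linarith

theorem uniformContinuousOn_setOf_subset_of_continuous [ProperSpace M] {Y : Type*}
    [UniformSpace Y] {f : NonemptyCompacts M → Y} (hf : Continuous f) {B : Set M}
    (hB : IsBounded B) : UniformContinuousOn f {K | (K : Set M) ⊆ B} :=
  ((NonemptyCompacts.isCompact_setOf_subset hB.isCompact_closure)
    |>.uniformContinuousOn_of_continuous hf.continuousOn).mono fun _ hK => hK.trans subset_closure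

theorem Tractable.continuous_cMag_of_uniformContinuous_finite_closedBall (hM : Tractable M)
    (h : ∀ (x : M) (r : ℝ), 0 < r →
      UniformContinuous (fun F : {K : NonemptyCompacts M //
        (K : Set M).Finite ∧ (K : Set M) ⊆ closedBall x r} =>
          cMag ((F : NonemptyCompacts M) : Set M))) :
    Continuous fun K : NonemptyCompacts M => cMag (K : Set M) := by
  refine continuous_iff_continuousAt.2 fun K₀ => ?_
  obtain ⟨x, hx⟩ := K₀.nonempty
  obtain ⟨R, hR⟩ := K₀.isCompact.isBounded.subset_closedBall x
  have hR₀ : 0 ≤ R := dist_nonneg.trans (mem_closedBall.1 (hR hx))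
  exact continuousAt_of_uniformContinuousOn_of_approx
    (NonemptyCompacts.setOf_subset_closedBall_mem_nhds hR one_pos)
    (uniformContinuousOn_iff_restrict.2 (h x (R + 1) (by linarith)))
    fun K _ η hη => K.exists_finite_dist_lt_and_dist_cMag_lt (hM.cMagE_ne_top K) hη

end Magnitude

/-- For a tractable metric space `M`, continuity of the magnitude map on
nonempty compact subsets is equivalent to uniform continuity of magnitude on nonempty
finite subsets of every bounded `B ⊆ M`, and to uniform continuity of magnitude on
nonempty finite subsets of every closed ball; moreover these imply continuity of the
magnitude map on nonempty finite subsets of `M`. -/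
theorem stmt_13 {M : Type*} [MetricSpace M] (hM : Tractable M) :
    ((Continuous fun K : NonemptyCompacts M => cMag (K : Set M)) ↔
      (∀ B : Set M, IsBounded B →
        UniformContinuous
          (fun F : {K : NonemptyCompacts M // (K : Set M).Finite ∧ (K : Set M) ⊆ B} =>
            cMag ((F : NonemptyCompacts M) : Set M)))) ∧
    ((∀ B : Set M, IsBounded B →
        UniformContinuous
          (fun F : {K : NonemptyCompacts M // (K : Set M).Finite ∧ (K : Set M) ⊆ B} =>
            cMag ((F : NonemptyCompacts M) : Set M))) ↔
      (∀ (x : M) (r : ℝ), 0 < r →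
        UniformContinuous
          (fun F : {K : NonemptyCompacts M //
              (K : Set M).Finite ∧ (K : Set M) ⊆ closedBall x r} =>
            cMag ((F : NonemptyCompacts M) : Set M)))) ∧
    ((Continuous fun K : NonemptyCompacts M => cMag (K : Set M)) →
      Continuous fun F : {K : NonemptyCompacts M // (K : Set M).Finite} =>
        cMag ((F : NonemptyCompacts M) : Set M)) := by
  have : ProperSpace M := ⟨hM.2.1⟩
  have continuous_imp_bounded (hA : Continuous fun K : NonemptyCompacts M => cMag (K : Set M))
      (B : Set M) (hB : IsBounded B) : UniformContinuous fun F : {K : NonemptyCompacts M //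
        (K : Set M).Finite ∧ (K : Set M) ⊆ B} => cMag ((F : NonemptyCompacts M) : Set M) :=
    uniformContinuousOn_iff_restrict.1 <|
      (uniformContinuousOn_setOf_subset_of_continuous hA hB).mono fun _ hK => hK.2
  have ball_imp_continuous := hM.continuous_cMag_of_uniformContinuous_finite_closedBall
  exact ⟨⟨continuous_imp_bounded,
      fun hB => ball_imp_continuous fun x r _ => hB _ isBounded_closedBall⟩,
    ⟨fun hB x r _ => hB _ isBounded_closedBall,
      fun hC => continuous_imp_bounded (ball_imp_continuous hC)⟩,
    fun hA => hA.comp continuous_subtype_val⟩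
end

section
/- The magnitude map on nonempty compact subsets of ℕ (viewed as a metric subspace of ℝ), equipped with the Hausdorff metric, is not Lipschitz: for every C > 0 there exist nonempty finite sets A, B ⊆ ℕ (namely A = {2k : 0 ≤ k ≤ N} and B = {0, 1, …, 2N} for suitable N) with d_H(A, B) = 1 and mg(B) − mg(A) = N·(2 tanh(1/2) − tanh(1)) > C. -/
open Metric TopologicalSpace Filter Topology Bornology
open scoped ENNReal NNReal

/-!
For points `a₀ < ⋯ < aₙ` of `ℝ`, the row of the similarity matrix belonging to a newly appended
right endpoint is, off the diagonal, `e^{-d}` times the row of the old endpoint (`d` the new gap).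
Appending points one at a time therefore shows that the matrix is invertible and has a weighting
`w` (`Z w = 1`) with `∑ w = 1 + ∑ᵢ tanh ((aᵢ₊₁ - aᵢ) / 2)`; this sum is the magnitude.
Since `tanh (k x) ≤ k tanh x`, every finite set of multiples of `c` in `[0, c N]` has magnitude at
most `1 + N tanh (c / 2)`, attained by the whole progression. Hence
`mg {0, …, 2N} - mg {0, 2, …, 2N} = N (2 tanh ½ - tanh 1)`, which is unbounded in `N`
although the two sets are at Hausdorff distance `1`.
-/

open Matrix Real

noncomputable def simMatrixOf {ι Y : Type*} [PseudoMetricSpace Y] (a : ι → Y) : Matrix ι ι ℝ :=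
  Matrix.of fun i j => exp (-dist (a i) (a j))

theorem simMatrixOf_comm {ι Y : Type*} [PseudoMetricSpace Y] (a : ι → Y) (i j : ι) :
    simMatrixOf a i j = simMatrixOf a j i := by
  simp only [simMatrixOf, Matrix.of_apply, dist_comm]

theorem simMatrixOf_self {ι Y : Type*} [PseudoMetricSpace Y] (a : ι → Y) (i : ι) :
    simMatrixOf a i i = 1 := by
  simp [simMatrixOf]

theorem Matrix.sum_inv_apply_eq_sum_of_mulVec_eq_one {ι R : Type*} [Fintype ι] [DecidableEq ι]
    [CommRing R] {M : Matrix ι ι R} (hM : IsUnit M.det) {w : ι → R} (hw : M *ᵥ w = 1) :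
    ∑ i, ∑ j, M⁻¹ i j = ∑ i, w i := by
  have : Invertible M := M.invertibleOfIsUnitDet hM
  have hinv : M⁻¹ *ᵥ 1 = w := Matrix.inv_mulVec_eq_vec hw.symm
  simp only [← hinv, Matrix.mulVec, dotProduct, Pi.one_apply, mul_one]

theorem simMatrix_eq_submatrix {X ι Y : Type*} [MetricSpace X] [PseudoMetricSpace Y]
    {s : Finset X} (e : ι ≃ s) (a : ι → Y) (ha : ∀ i j, dist (a i) (a j) = dist (e i : X) (e j)) :
    simMatrix s = (simMatrixOf a).submatrix e.symm e.symm := by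
  ext x y
  simp [simMatrix, simMatrixOf, ha]

theorem finMag_eq_sum_inv_simMatrixOf {X ι Y : Type*} [MetricSpace X] [PseudoMetricSpace Y]
    [Fintype ι] [DecidableEq ι] {s : Finset X} (e : ι ≃ s) (a : ι → Y)
    (ha : ∀ i j, dist (a i) (a j) = dist (e i : X) (e j)) :
    finMag s = ∑ i, ∑ j, (simMatrixOf a)⁻¹ i j := by
  let _ : DecidableEq X := Classical.decEq X
  rw [finMag, simMatrix_eq_submatrix e a ha, Matrix.inv_submatrix_equiv]
  simp only [Matrix.submatrix_apply]
  exact Fintype.sum_equiv e.symm _ _ fun x => Fintype.sum_equiv e.symm _ _ fun y => rfl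

theorem cMag_eq_finMag_of_forall_le {X : Type*} [MetricSpace X] {K : Set X} {F : Finset X}
    (hF : ↑F ⊆ K) (hmax : ∀ s : Finset X, ↑s ⊆ K → finMag s ≤ finMag F) : cMag K = finMag F := by
  have h0 : 0 ≤ finMag F := by simpa [finMag] using hmax ∅ (by simp)
  have hE : cMagE K = ENNReal.ofReal (finMag F) :=
    le_antisymm (iSup₂_le fun s hs => ENNReal.ofReal_le_ofReal (hmax s hs))
      (le_iSup₂_of_le F hF le_rfl)
  rw [cMag, hE, ENNReal.toReal_ofReal h0]

theorem Real.exp_neg_abs_sub_of_le {x y z : ℝ} (hxy : x ≤ y) (hyz : y ≤ z) :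
    exp (-|z - x|) = exp (-(z - y)) * exp (-|y - x|) := by
  rw [abs_of_nonneg (by linarith), abs_of_nonneg (by linarith), ← exp_add]
  ring_nf

theorem Real.tanh_half_eq (x : ℝ) :
    tanh (x / 2) = (1 - exp (-x)) / (1 + exp (-x)) := by
  have hsq : exp (-x) = exp (-(x / 2)) * exp (-(x / 2)) := by
    rw [← exp_add]; ring_nf
  have hinv : exp (x / 2) * exp (-(x / 2)) = 1 := by
    rw [← exp_add]; simp
  rw [tanh_eq, hsq, div_eq_div_iff (by positivity) (by positivity)]
  linear_combination (2 * exp (-(x / 2))) * hinv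

theorem Real.tanh_add (x y : ℝ) :
    tanh (x + y) = (tanh x + tanh y) / (1 + tanh x * tanh y) := by
  have hx := cosh_pos x
  have hy := cosh_pos y
  rw [tanh_eq_sinh_div_cosh, tanh_eq_sinh_div_cosh, tanh_eq_sinh_div_cosh,
    sinh_add, cosh_add]
  field_simp

theorem Real.tanh_nonneg {x : ℝ} (hx : 0 ≤ x) : 0 ≤ tanh x := by
  rw [tanh_eq_sinh_div_cosh]
  exact div_nonneg (sinh_nonneg_iff.2 hx) (cosh_pos x).le

theorem Real.tanh_pos {x : ℝ} (hx : 0 < x) : 0 < tanh x := by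
  rw [tanh_eq_sinh_div_cosh]
  exact div_pos (sinh_pos_iff.2 hx) (cosh_pos x)

theorem Real.tanh_add_le {x y : ℝ} (hx : 0 ≤ x) (hy : 0 ≤ y) :
    tanh (x + y) ≤ tanh x + tanh y := by
  have := tanh_nonneg hx
  have := tanh_nonneg hy
  rw [tanh_add]
  exact div_le_self (by positivity) (le_add_of_nonneg_right (by positivity))

theorem Real.tanh_two_mul_lt {x : ℝ} (hx : 0 < x) : tanh (2 * x) < 2 * tanh x := by
  have := tanh_pos hx
  rw [two_mul, tanh_add, ← two_mul]
  exact div_lt_self (by positivity) (lt_add_of_pos_right _ (by positivity))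

theorem Real.tanh_nat_mul_le (k : ℕ) {x : ℝ} (hx : 0 ≤ x) :
    tanh (k * x) ≤ k * tanh x := by
  induction k with
  | zero => simp
  | succ k ih =>
    calc tanh ((k + 1 : ℕ) * x) ≤ tanh (k * x) + tanh x := by
          rw [Nat.cast_succ, add_mul, one_mul]
          exact tanh_add_le (by positivity) hx
      _ ≤ (k + 1 : ℕ) * tanh x := by push_cast; linarith

section AppendPoint

variable {n : ℕ} (a : Fin (n + 2) → ℝ)

theorem simMatrixOf_last_castSucc (ha : Monotone a) (j : Fin (n + 1)) :
    simMatrixOf a (Fin.last _) j.castSucc =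
      exp (-(a (Fin.last _) - a (Fin.last n).castSucc)) *
        simMatrixOf (a ∘ Fin.castSucc) (Fin.last n) j := by
  simp only [simMatrixOf, Matrix.of_apply, dist_eq, Function.comp_apply]
  exact exp_neg_abs_sub_of_le (ha (Fin.castSucc_le_castSucc_iff.2 (Fin.le_last j)))
    (ha (Fin.le_last _))

theorem simMatrixOf_castSucc_last (ha : Monotone a) (i : Fin (n + 1)) :
    simMatrixOf a i.castSucc (Fin.last _) =
      exp (-(a (Fin.last _) - a (Fin.last n).castSucc)) *
        simMatrixOf (a ∘ Fin.castSucc) i (Fin.last n) := by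
  rw [simMatrixOf_comm, simMatrixOf_comm _ i]
  exact simMatrixOf_last_castSucc a ha i

theorem simMatrixOf_mulVec_castSucc (ha : Monotone a) (v : Fin (n + 2) → ℝ) (i : Fin (n + 1)) :
    (simMatrixOf a *ᵥ v) i.castSucc =
      (simMatrixOf (a ∘ Fin.castSucc) *ᵥ (v ∘ Fin.castSucc)) i +
        exp (-(a (Fin.last _) - a (Fin.last n).castSucc)) *
          simMatrixOf (a ∘ Fin.castSucc) i (Fin.last n) * v (Fin.last _) := by
  rw [mulVec, dotProduct, Fin.sum_univ_castSucc, simMatrixOf_castSucc_last a ha]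
  rfl

theorem simMatrixOf_mulVec_last (ha : Monotone a) (v : Fin (n + 2) → ℝ) :
    (simMatrixOf a *ᵥ v) (Fin.last _) =
      exp (-(a (Fin.last _) - a (Fin.last n).castSucc)) *
        (simMatrixOf (a ∘ Fin.castSucc) *ᵥ (v ∘ Fin.castSucc)) (Fin.last n) + v (Fin.last _) := by
  simp only [mulVec, dotProduct, Fin.sum_univ_castSucc (n := n + 1), simMatrixOf_last_castSucc a ha,
    Finset.mul_sum, mul_assoc]
  simp [simMatrixOf]

end AppendPoint

theorem eq_zero_of_simMatrixOf_mulVec_eq_zero {n : ℕ} {a : Fin (n + 1) → ℝ} (ha : StrictMono a)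
    {v : Fin (n + 1) → ℝ} (hv : simMatrixOf a *ᵥ v = 0) : v = 0 := by
  induction n with
  | zero =>
    ext i
    fin_cases i
    simpa [mulVec, dotProduct, simMatrixOf] using congrFun hv 0
  | succ n ih =>
    set q := exp (-(a (Fin.last _) - a (Fin.last n).castSucc))
    have hq0 : 0 < q := exp_pos _
    have hq1 : q < 1 :=
      exp_lt_one_iff.2 (neg_neg_of_pos (sub_pos.2 (ha (Fin.castSucc_lt_last _))))
    have hlast : v (Fin.last _) = 0 := by
      -- the last row minus `q` times the previous one is `(0, …, 0, 1 - q²)`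
      have h1 := simMatrixOf_mulVec_last a ha.monotone v
      have h2 := simMatrixOf_mulVec_castSucc a ha.monotone v (Fin.last n)
      rw [hv] at h1
      rw [hv, simMatrixOf_self] at h2
      have : (1 - q ^ 2) * v (Fin.last _) = 0 := by
        simp only [Pi.zero_apply] at h1 h2
        linear_combination q * h2 - h1
      exact (mul_eq_zero.1 this).resolve_left (by nlinarith)
    have hinit : v ∘ Fin.castSucc = 0 := by
      refine ih (ha.comp Fin.strictMono_castSucc) (funext fun i => ?_)
      simpa [hv, hlast] using (simMatrixOf_mulVec_castSucc a ha.monotone v i).symm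
    funext i
    induction i using Fin.lastCases with
    | last => exact hlast
    | cast i => exact congrFun hinit i

theorem det_simMatrixOf_ne_zero {n : ℕ} {a : Fin (n + 1) → ℝ} (ha : StrictMono a) :
    (simMatrixOf a).det ≠ 0 := fun h => by
  obtain ⟨v, hv0, hv⟩ := Matrix.exists_mulVec_eq_zero_iff.2 h
  exact hv0 (eq_zero_of_simMatrixOf_mulVec_eq_zero ha hv)

theorem exists_simMatrixOf_mulVec_eq_one {n : ℕ} {a : Fin (n + 1) → ℝ} (ha : StrictMono a) :
    ∃ w, simMatrixOf a *ᵥ w = 1 ∧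
      ∑ i, w i = 1 + ∑ i : Fin n, tanh ((a i.succ - a i.castSucc) / 2) := by
  induction n with
  | zero => exact ⟨1, by ext i; fin_cases i; simp [mulVec, dotProduct, simMatrixOf], by simp⟩
  | succ n ih =>
    obtain ⟨w, hw, hsum⟩ := ih (ha.comp Fin.strictMono_castSucc)
    set q := exp (-(a (Fin.last _) - a (Fin.last n).castSucc)) with hq
    have hq1 : 1 + q ≠ 0 := by positivity
    set t := q / (1 + q)
    -- the new point gets weight `1 / (1 + q)`; the old endpoint gives up `q / (1 + q)`, which is
    -- what the new column adds to every old row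
    let w' : Fin (n + 2) → ℝ := Fin.snoc (w - t • Pi.single (Fin.last n) 1) (1 / (1 + q))
    have hw'init : w' ∘ Fin.castSucc = w - t • Pi.single (Fin.last n) 1 :=
      funext fun i => Fin.snoc_castSucc (α := fun _ => ℝ) ..
    have hw'last : w' (Fin.last _) = 1 / (1 + q) := Fin.snoc_last (α := fun _ => ℝ) ..
    have hinit : simMatrixOf (a ∘ Fin.castSucc) *ᵥ (w' ∘ Fin.castSucc) =
        1 - t • (simMatrixOf (a ∘ Fin.castSucc)).col (Fin.last n) := by
      rw [hw'init, mulVec_sub, mulVec_smul, mulVec_single_one, hw]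
    refine ⟨w', funext fun i => ?_, ?_⟩
    · induction i using Fin.lastCases with
      | last =>
        rw [simMatrixOf_mulVec_last a ha.monotone, ← hq, hinit, hw'last]
        simp only [Pi.sub_apply, Pi.smul_apply, smul_eq_mul, col_apply, simMatrixOf_self,
          Pi.one_apply, t]
        field_simp
        ring
      | cast i =>
        rw [simMatrixOf_mulVec_castSucc a ha.monotone, ← hq, hinit, hw'last]
        simp only [Pi.sub_apply, Pi.smul_apply, smul_eq_mul, col_apply, Pi.one_apply, t]
        field_simp
        ring
    · have hgap : tanh ((a (Fin.last _) - a (Fin.last n).castSucc) / 2) = (1 - q) / (1 + q) := by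
        rw [tanh_half_eq, ← hq]
      have hinit_sum : ∑ i : Fin (n + 1), w' i.castSucc = ∑ i, w i - t := by
        simp [w', Finset.sum_sub_distrib, ← Finset.mul_sum]
      rw [Fin.sum_univ_castSucc, hinit_sum, hw'last, hsum, Fin.sum_univ_castSucc (n := n),
        Fin.succ_last, hgap]
      simp only [Function.comp_apply, Fin.succ_castSucc, t]
      field_simp
      ring

theorem sum_inv_simMatrixOf {n : ℕ} {a : Fin (n + 1) → ℝ} (ha : StrictMono a) :
    ∑ i, ∑ j, (simMatrixOf a)⁻¹ i j =
      1 + ∑ i : Fin n, tanh ((a i.succ - a i.castSucc) / 2) := by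
  obtain ⟨w, hw, hsum⟩ := exists_simMatrixOf_mulVec_eq_one ha
  rw [Matrix.sum_inv_apply_eq_sum_of_mulVec_eq_one (det_simMatrixOf_ne_zero ha).isUnit hw, hsum]

theorem Fin.sum_succ_sub_castSucc {M : Type*} [AddCommGroup M] :
    ∀ {m : ℕ} (u : Fin (m + 1) → M), ∑ i : Fin m, (u i.succ - u i.castSucc) = u (Fin.last m) - u 0
  | 0, u => by simp
  | m + 1, u => by
    have := Fin.sum_succ_sub_castSucc (u ∘ Fin.castSucc)
    simp only [Function.comp_apply, ← Fin.succ_castSucc] at this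
    rw [Fin.sum_univ_castSucc, this, Fin.succ_last, Fin.castSucc_zero]
    abel

theorem sum_tanh_half_gaps_le {m : ℕ} (a : Fin (m + 1) → ℝ) {c : ℝ} (hc : 0 < c)
    (hgap : ∀ i : Fin m, ∃ k : ℕ, a i.succ - a i.castSucc = k * c) :
    ∑ i : Fin m, tanh ((a i.succ - a i.castSucc) / 2) ≤
      (a (Fin.last m) - a 0) / c * tanh (c / 2) := by
  have hterm (i : Fin m) : tanh ((a i.succ - a i.castSucc) / 2) ≤
      (a i.succ - a i.castSucc) / c * tanh (c / 2) := by
    obtain ⟨k, hk⟩ := hgap i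
    rw [hk, mul_div_cancel_right₀ _ hc.ne', mul_div_assoc]
    exact tanh_nat_mul_le k (by positivity)
  calc _ ≤ ∑ i : Fin m, (a i.succ - a i.castSucc) / c * tanh (c / 2) :=
        Finset.sum_le_sum fun i _ => hterm i
    _ = _ := by rw [← Finset.sum_mul, ← Finset.sum_div, Fin.sum_succ_sub_castSucc]

theorem finMag_nat_eq_one_add_sum_tanh {m : ℕ} {s : Finset ℕ} (e : Fin (m + 1) ≃ s)
    (he : StrictMono fun i => (e i : ℕ)) :
    finMag s = 1 + ∑ i : Fin m, tanh ((((e i.succ : ℕ) : ℝ) - (e i.castSucc : ℕ)) / 2) := by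
  rw [finMag_eq_sum_inv_simMatrixOf e (fun i => ((e i : ℕ) : ℝ)) fun i j => Nat.dist_cast_real _ _,
    sum_inv_simMatrixOf (a := fun i => ((e i : ℕ) : ℝ)) (Nat.strictMono_cast.comp he)]

theorem finMag_le_of_subset_image_mul {c N : ℕ} (hc : 0 < c) {s : Finset ℕ}
    (hs : ↑s ⊆ (fun k => c * k) '' {k | k ≤ N}) : finMag s ≤ 1 + N * tanh (c / 2) := by
  have htanh : 0 ≤ tanh (c / 2) := tanh_nonneg (by positivity)
  rcases s.eq_empty_or_nonempty with rfl | hne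
  · simp only [finMag, Finset.univ_eq_empty, Finset.sum_empty]
    positivity
  obtain ⟨m, hm⟩ : ∃ m, s.card = m + 1 := Nat.exists_eq_add_one.2 hne.card_pos
  set e := s.orderIsoOfFin hm
  have hmem (i : Fin (m + 1)) : ∃ k ≤ N, c * k = e i := hs (e i).2
  have hgap (i : Fin m) : ∃ k : ℕ, ((e i.succ : ℕ) : ℝ) - (e i.castSucc : ℕ) = k * c := by
    obtain ⟨k, -, hk⟩ := hmem i.succ
    obtain ⟨l, -, hl⟩ := hmem i.castSucc
    have hlt : (e i.castSucc : ℕ) < e i.succ := e.strictMono Fin.castSucc_lt_succ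
    refine ⟨k - l, ?_⟩
    rw [← hk, ← hl] at hlt ⊢
    rw [Nat.cast_sub (le_of_lt (Nat.lt_of_mul_lt_mul_left hlt))]
    push_cast
    ring
  have hspan : ((e (Fin.last m) : ℕ) : ℝ) - (e 0 : ℕ) ≤ N * c := by
    obtain ⟨k, hk, hke⟩ := hmem (Fin.last m)
    have : ((e (Fin.last m) : ℕ) : ℝ) ≤ N * c := by rw [← hke, mul_comm]; push_cast; gcongr
    linarith [(e 0 : ℕ).cast_nonneg (α := ℝ)]
  rw [finMag_nat_eq_one_add_sum_tanh e.toEquiv (Subtype.strictMono_coe _ |>.comp e.strictMono)]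
  have hsum := sum_tanh_half_gaps_le (fun i => ((e i : ℕ) : ℝ)) (by positivity) hgap
  have hspan' := div_le_of_le_mul₀ (by positivity) (by positivity) hspan
  exact add_le_add_right (hsum.trans (mul_le_mul_of_nonneg_right hspan' htanh)) 1

theorem finMag_image_mul_Iic {c : ℕ} (hc : 0 < c) (N : ℕ) :
    finMag ((Finset.Iic N).image (c * ·)) = 1 + N * tanh (c / 2) := by
  have hmono : StrictMono fun i : Fin (N + 1) => c * (i : ℕ) :=
    fun i j hij => Nat.mul_lt_mul_of_pos_left hij hc
  let e : Fin (N + 1) ≃ (Finset.Iic N).image (c * ·) := Equiv.ofBijective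
    (fun i => ⟨c * i, Finset.mem_image_of_mem _ (Finset.mem_Iic.2 (Nat.lt_succ_iff.1 i.2))⟩)
    ⟨fun i j hij => hmono.injective (congrArg Subtype.val hij), fun ⟨_, hx⟩ => by
      obtain ⟨k, hk, rfl⟩ := Finset.mem_image.1 hx
      exact ⟨⟨k, Nat.lt_succ_iff.2 (Finset.mem_Iic.1 hk)⟩, rfl⟩⟩
  have hgap (i : Fin N) : (((e i.succ : ℕ) : ℝ) - (e i.castSucc : ℕ)) / 2 = c / 2 := by
    change (((c * (i + 1) : ℕ) : ℝ) - (c * i : ℕ)) / 2 = c / 2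
    push_cast
    ring
  simp [finMag_nat_eq_one_add_sum_tanh e hmono, hgap]

theorem cMag_image_mul_Iic {c : ℕ} (hc : 0 < c) (N : ℕ) :
    cMag ((fun k => c * k) '' {k | k ≤ N}) = 1 + N * tanh (c / 2) := by
  rw [← finMag_image_mul_Iic hc N]
  refine cMag_eq_finMag_of_forall_le ?_ fun s hs => ?_
  · rw [Finset.coe_image, Finset.coe_Iic]
    exact subset_rfl
  · rw [finMag_image_mul_Iic hc N]
    exact finMag_le_of_subset_image_mul hc hs

theorem hausdorffDist_image_two_mul_Iic {N : ℕ} (hN : 1 ≤ N) :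
    hausdorffDist ((fun k => 2 * k) '' {k : ℕ | k ≤ N}) {n : ℕ | n ≤ 2 * N} = 1 := by
  have hA : ((fun k => 2 * k) '' {k : ℕ | k ≤ N}).Nonempty := ⟨0, 0, Nat.zero_le _, rfl⟩
  have hne_top : hausdorffEDist {n : ℕ | n ≤ 2 * N} ((fun k => 2 * k) '' {k : ℕ | k ≤ N}) ≠ ⊤ :=
    hausdorffEDist_ne_top_of_nonempty_of_bounded ⟨0, Nat.zero_le _⟩ hA
      (Set.finite_le_nat _).isBounded ((Set.finite_le_nat N).image _).isBounded
  refine le_antisymm (hausdorffDist_le_of_mem_dist zero_le_one ?_ ?_) ?_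
  · rintro _ ⟨k, hk, rfl⟩
    exact ⟨2 * k, by simp only [Set.mem_ofPred_eq] at hk ⊢; omega, by simp⟩
  · intro n hn
    refine ⟨2 * (n / 2), ⟨n / 2, by simp only [Set.mem_ofPred_eq] at hn ⊢; omega, rfl⟩, ?_⟩
    have hn2 : (n : ℝ) = (2 * (n / 2) : ℕ) + (n % 2 : ℕ) := by
      exact_mod_cast (Nat.div_add_mod n 2).symm
    rw [← Nat.dist_cast_real, dist_eq, hn2, add_sub_cancel_left, abs_of_nonneg (Nat.cast_nonneg _)]
    exact_mod_cast Nat.le_of_lt_succ (Nat.mod_lt n two_pos)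
  · calc (1 : ℝ) ≤ infDist 1 ((fun k => 2 * k) '' {k : ℕ | k ≤ N}) := by
          refine (le_infDist hA).2 ?_
          rintro _ ⟨k, -, rfl⟩
          exact Nat.pairwise_one_le_dist (show 1 ≠ 2 * k by omega)
      _ ≤ hausdorffDist {n : ℕ | n ≤ 2 * N} ((fun k => 2 * k) '' {k : ℕ | k ≤ N}) :=
          infDist_le_hausdorffDist_of_mem (by simp only [Set.mem_ofPred_eq]; omega) hne_top
      _ = _ := hausdorffDist_comm

theorem not_exists_lipschitzWith_of_forall_lt_sub {α : Type*} [PseudoMetricSpace α] {f : α → ℝ}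
    (h : ∀ C : ℝ, ∃ x y, dist x y ≤ 1 ∧ C < f y - f x) : ¬ ∃ K, LipschitzWith K f := by
  rintro ⟨K, hK⟩
  obtain ⟨x, y, hxy, hlt⟩ := h K
  have hf := hK.dist_le_mul x y
  rw [dist_eq, abs_sub_comm] at hf
  nlinarith [le_abs_self (f y - f x), K.coe_nonneg]

/-- The magnitude map on nonempty compact subsets of `ℕ` is not Lipschitz:
for every `C > 0` there is `N` such that `A = {2k : k ≤ N}` and `B = {0, …, 2N}` satisfy
`d_H(A, B) = 1` and `mg(B) − mg(A) = N·(2 tanh(1/2) − tanh 1) > C`. -/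
theorem stmt_16 :
    (¬ ∃ C : ℝ≥0, LipschitzWith C (fun K : NonemptyCompacts ℕ => cMag (K : Set ℕ))) ∧
    (∀ C : ℝ, 0 < C → ∃ N : ℕ, 1 ≤ N ∧
      hausdorffDist ((fun k => 2 * k) '' {k : ℕ | k ≤ N}) {n : ℕ | n ≤ 2 * N} = 1 ∧
      cMag ({n : ℕ | n ≤ 2 * N} : Set ℕ) - cMag ((fun k => 2 * k) '' {k : ℕ | k ≤ N}) =
        N * (2 * Real.tanh (1 / 2) - Real.tanh 1) ∧
      C < N * (2 * Real.tanh (1 / 2) - Real.tanh 1)) := by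
  set δ := 2 * Real.tanh (1 / 2) - Real.tanh 1 with hδ_def
  have hδ : 0 < δ := sub_pos.2 (by simpa using Real.tanh_two_mul_lt (x := 1 / 2) (by norm_num))
  have hmag (N : ℕ) :
      cMag {n : ℕ | n ≤ 2 * N} - cMag ((fun k => 2 * k) '' {k : ℕ | k ≤ N}) = N * δ := by
    have hB := cMag_image_mul_Iic one_pos (2 * N)
    simp only [one_mul, Set.image_id'] at hB
    rw [hB, cMag_image_mul_Iic two_pos N, hδ_def]
    norm_num
    ring
  have hlarge (C : ℝ) (hC : 0 < C) : ∃ N : ℕ, 1 ≤ N ∧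
      hausdorffDist ((fun k => 2 * k) '' {k : ℕ | k ≤ N}) {n : ℕ | n ≤ 2 * N} = 1 ∧
      cMag {n : ℕ | n ≤ 2 * N} - cMag ((fun k => 2 * k) '' {k : ℕ | k ≤ N}) = N * δ ∧
      C < N * δ := by
    obtain ⟨N, hN⟩ := exists_nat_gt (C / δ)
    have hN1 : 1 ≤ N := Nat.cast_pos.1 ((div_pos hC hδ).trans hN)
    exact ⟨N, hN1, hausdorffDist_image_two_mul_Iic hN1, hmag N, (div_lt_iff₀ hδ).1 hN⟩
  refine ⟨not_exists_lipschitzWith_of_forall_lt_sub fun C => ?_, hlarge⟩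
  obtain ⟨N, hN1, hdist, hdiff, hlt⟩ := hlarge (max C 1) (by positivity)
  refine ⟨⟨⟨_, ((Set.finite_le_nat N).image _).isCompact⟩, ⟨0, 0, Nat.zero_le _, rfl⟩⟩,
    ⟨⟨_, (Set.finite_le_nat (2 * N)).isCompact⟩, ⟨0, Nat.zero_le _⟩⟩,
    (NonemptyCompacts.dist_eq).trans_le hdist.le, ?_⟩
  exact (le_max_left C 1).trans_lt (hdiff ▸ hlt)
end

section
/- Let a, b ∈ ℝ with a < b. Then the magnitude map on nonempty compact subsets of the interval [a, b], equipped with the Hausdorff metric, is Lipschitz with Lipschitz constant 1 + (b − a)/2; the same holds for the magnitude map on nonempty finite subsets of [a, b]. -/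
open Metric TopologicalSpace Filter Topology Bornology
open scoped ENNReal NNReal

/-!
For points `x₀ < ⋯ < xₘ` of `ℝ` the similarity matrix `(exp (-|xᵢ - xⱼ|))` factors as `L D Lᵀ`,
where `L i j = exp (xⱼ - xᵢ)` for `j ≤ i` (and `0` above the diagonal) and `D = diag (1 - rₖ²)`
with `rₖ = exp (xₖ₋₁ - xₖ)`; moreover `L (1 - rₖ)ₖ = 1`. Both identities are telescoping sums.
Hence `mg = ∑ (1 - rₖ)² / (1 - rₖ²) = 1 + ∑ tanh ((xₖ - xₖ₋₁) / 2)`, which is monotone in the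
set because `tanh (t / 2)` is subadditive.

Suppose every point of a finite `H ⊆ ℝ` lies within `ε` of a subset `G ⊆ H`. Inside a gap
`[c, c']` of `G` the points of `H` then form two clusters, within `ε` of `c` and of `c'`; since
`tanh (t / 2) ≤ t / 2`, clusters of widths summing to `2 s ≤ 2 ε` contribute at most
`s + tanh ((c' - c - 2 s) / 2) ≤ (1 + ε) tanh ((c' - c) / 2)`. The clusters outside the hull of
`G` contribute at most `ε`, so `mg H ≤ (1 + ε) mg G`. For compact `K, L ⊆ [a, b]` and finite
`F ⊆ K`, take a finite `G ⊆ L` approximating `F` within `d_H(K, L)`; then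
`mg F ≤ mg (F ∪ G) ≤ mg G + d_H(K, L) (1 + (b - a) / 2)`, as `mg G ≤ 1 + (b - a) / 2`.
-/

open Real

/-- `gapWeight d = tanh (d / 2)`. -/
noncomputable def gapWeight (d : ℝ) : ℝ := (1 - exp (-d)) / (1 + exp (-d))

lemma gapWeight_zero : gapWeight 0 = 0 := by simp [gapWeight]

lemma gapWeight_nonneg {d : ℝ} (hd : 0 ≤ d) : 0 ≤ gapWeight d := by
  have : exp (-d) ≤ 1 := exp_le_one_iff.mpr (by linarith)
  exact div_nonneg (by linarith) (by positivity)

lemma gapWeight_le_one (d : ℝ) : gapWeight d ≤ 1 := by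
  rw [gapWeight, div_le_one (by positivity)]
  linarith [exp_pos (-d)]

lemma gapWeight_mono : Monotone gapWeight := by
  intro d d' hdd
  have : exp (-d') ≤ exp (-d) := exp_le_exp.mpr (by linarith)
  rw [gapWeight, gapWeight, div_le_div_iff₀ (by positivity) (by positivity)]
  nlinarith

lemma hasDerivAt_gapWeight (d : ℝ) :
    HasDerivAt gapWeight ((1 - gapWeight d ^ 2) / 2) d := by
  have he : HasDerivAt (fun t => exp (-t)) (-exp (-d)) d := by
    simpa using (hasDerivAt_neg d).exp
  refine ((he.const_sub 1).div (he.const_add 1) (by positivity)).congr_deriv ?_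
  unfold gapWeight
  field_simp
  ring

lemma gapWeight_le_half {d : ℝ} (hd : 0 ≤ d) : gapWeight d ≤ d / 2 := by
  have hmono : Monotone (fun t => t / 2 - gapWeight t) := by
    refine monotone_of_hasDerivAt_nonneg
      (fun t => ((hasDerivAt_id t).div_const 2).sub (hasDerivAt_gapWeight t)) fun t => ?_
    simp only [Pi.zero_apply]
    nlinarith [sq_nonneg (gapWeight t)]
  simpa [gapWeight_zero] using hmono hd

lemma gapWeight_add_le {d e : ℝ} (hd : 0 ≤ d) (he : 0 ≤ e) :
    gapWeight (d + e) ≤ gapWeight d + gapWeight e := by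
  have hu : exp (-d) ≤ 1 := exp_le_one_iff.mpr (by linarith)
  have hv : exp (-e) ≤ 1 := exp_le_one_iff.mpr (by linarith)
  have hu0 := exp_pos (-d)
  have hv0 := exp_pos (-e)
  unfold gapWeight
  rw [neg_add, exp_add, div_add_div _ _ (by positivity) (by positivity),
    div_le_div_iff₀ (by positivity) (by positivity)]
  nlinarith [mul_nonneg (mul_nonneg (sub_nonneg.mpr hu) (sub_nonneg.mpr hv))
    (sub_nonneg.mpr (mul_le_one₀ hu hv0.le hv)), mul_pos hu0 hv0]

lemma mul_one_sub_gapWeight_sq_le {s h : ℝ} (hs : 0 ≤ s) (h2s : 2 * s ≤ h) :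
    s * (1 - gapWeight h ^ 2) ≤ gapWeight h - gapWeight (h - 2 * s) := by
  set Φ : ℝ → ℝ := fun t => gapWeight h - gapWeight (h - 2 * t) - t * (1 - gapWeight h ^ 2)
  have hΦ : ∀ t, HasDerivAt Φ (gapWeight h ^ 2 - gapWeight (h - 2 * t) ^ 2) t := by
    intro t
    have hin : HasDerivAt (fun t : ℝ => h - 2 * t) (-2) t := by
      simpa using ((hasDerivAt_id t).const_mul 2).const_sub h
    refine ((((hasDerivAt_gapWeight _).comp t hin).const_sub _).sub
      ((hasDerivAt_id t).mul_const (1 - gapWeight h ^ 2))).congr_deriv ?_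
    ring
  have hmono : MonotoneOn Φ (Set.Icc 0 (h / 2)) := by
    refine monotoneOn_of_hasDerivWithinAt_nonneg (convex_Icc _ _)
      (fun t _ => (hΦ t).continuousAt.continuousWithinAt)
      (fun t _ => (hΦ t).hasDerivWithinAt) fun t ht => ?_
    rw [interior_Icc] at ht
    have h0 : 0 ≤ gapWeight (h - 2 * t) := gapWeight_nonneg (by linarith [ht.2])
    have h1 : gapWeight (h - 2 * t) ≤ gapWeight h := gapWeight_mono (by linarith [ht.1])
    nlinarith
  have := hmono ⟨le_rfl, by linarith⟩ ⟨hs, by linarith⟩ hs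
  simp only [Φ, mul_zero, sub_zero, sub_self] at this
  linarith

lemma add_gapWeight_sub_le {s h ε : ℝ} (hs : 0 ≤ s) (hsε : s ≤ ε) (h2s : 2 * s ≤ h) :
    s + gapWeight (h - 2 * s) ≤ (1 + ε) * gapWeight h := by
  have hk := mul_one_sub_gapWeight_sq_le hs h2s
  have h0 : 0 ≤ gapWeight h := gapWeight_nonneg (by linarith)
  have h1 := gapWeight_le_one h
  have : s * gapWeight h ^ 2 ≤ ε * gapWeight h :=
    mul_le_mul hsε (by nlinarith) (by positivity) (hs.trans hsε)
  nlinarith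

noncomputable def gapSum : List ℝ → ℝ
  | a :: b :: l => gapWeight (b - a) + gapSum (b :: l)
  | _ => 0

@[simp] lemma gapSum_nil : gapSum [] = 0 := rfl

@[simp] lemma gapSum_singleton (a : ℝ) : gapSum [a] = 0 := rfl

@[simp] lemma gapSum_cons_cons (a b : ℝ) (l : List ℝ) :
    gapSum (a :: b :: l) = gapWeight (b - a) + gapSum (b :: l) := rfl

lemma gapSum_nonneg : ∀ {l : List ℝ}, l.Pairwise (· < ·) → 0 ≤ gapSum l
  | [], _ | [_], _ => le_rfl
  | a :: b :: l, hl => by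
    have hab := List.rel_of_pairwise_cons hl List.mem_cons_self
    rw [gapSum_cons_cons]
    linarith [gapWeight_nonneg (sub_nonneg.mpr hab.le), gapSum_nonneg hl.of_cons]

lemma gapSum_cons_le_half {M : ℝ} :
    ∀ {c : ℝ} {l : List ℝ}, (c :: l).Pairwise (· < ·) → (∀ x ∈ c :: l, x ≤ M) →
      gapSum (c :: l) ≤ (M - c) / 2
  | c, [], _, hM => by
    have := hM c List.mem_cons_self
    simp only [gapSum_singleton]
    linarith
  | c, b :: l, hl, hM => by
    have hcb := List.rel_of_pairwise_cons hl List.mem_cons_self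
    have ih := gapSum_cons_le_half hl.of_cons fun x hx => hM x (List.mem_cons_of_mem c hx)
    rw [gapSum_cons_cons]
    linarith [gapWeight_le_half (sub_nonneg.mpr hcb.le)]

lemma gapSum_le_gapSum_cons {a : ℝ} {l : List ℝ} (hl : (a :: l).Pairwise (· < ·)) :
    gapSum l ≤ gapSum (a :: l) := by
  cases l with
  | nil => simp
  | cons b l =>
    have hab := List.rel_of_pairwise_cons hl List.mem_cons_self
    rw [gapSum_cons_cons]
    linarith [gapWeight_nonneg (sub_nonneg.mpr hab.le)]

lemma gapSum_cons_le_gapSum_cons_cons {c a : ℝ} {l : List ℝ}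
    (hl : (c :: a :: l).Pairwise (· < ·)) : gapSum (c :: l) ≤ gapSum (c :: a :: l) := by
  have hca := List.rel_of_pairwise_cons hl List.mem_cons_self
  cases l with
  | nil => simpa using gapWeight_nonneg (sub_nonneg.mpr hca.le)
  | cons b l =>
    have hab := List.rel_of_pairwise_cons hl.of_cons List.mem_cons_self
    have := gapWeight_add_le (sub_nonneg.mpr hca.le) (sub_nonneg.mpr hab.le)
    rw [sub_add_sub_cancel'] at this
    simp only [gapSum_cons_cons]
    linarith

lemma gapSum_cons_le_of_sublist {l₁ l₂ : List ℝ} (h : l₁.Sublist l₂) :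
    ∀ {c : ℝ}, (c :: l₂).Pairwise (· < ·) → gapSum (c :: l₁) ≤ gapSum (c :: l₂) := by
  induction h with
  | slnil => exact fun _ => le_rfl
  | cons a _ ih =>
    exact fun hc => (ih (hc.sublist (.cons_cons _ (.cons _ (.refl _))))).trans
      (gapSum_cons_le_gapSum_cons_cons hc)
  | cons_cons a _ ih =>
    intro c hc
    simp only [gapSum_cons_cons]
    linarith [ih hc.of_cons]

lemma gapSum_le_of_sublist {l₁ l₂ : List ℝ} (h : l₁.Sublist l₂) (hl₂ : l₂.Pairwise (· < ·)) :
    gapSum l₁ ≤ gapSum l₂ := by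
  induction h with
  | slnil => exact le_rfl
  | cons a _ ih => exact (ih hl₂.of_cons).trans (gapSum_le_gapSum_cons hl₂)
  | cons_cons a h _ => exact gapSum_cons_le_of_sublist h hl₂

lemma gapSum_append_cons : ∀ (l : List ℝ) (c : ℝ) (r : List ℝ),
    gapSum (l ++ c :: r) = gapSum (l ++ [c]) + gapSum (c :: r)
  | [], c, r => by simp
  | [a], c, r => by simp
  | a :: b :: l, c, r => by
    simp only [List.cons_append, gapSum_cons_cons]
    rw [← List.cons_append, gapSum_append_cons (b :: l) c r]
    simp only [List.cons_append]
    ring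

lemma gapSum_eq_sum_range : ∀ l : List ℝ,
    gapSum l = ∑ k ∈ Finset.range (l.length - 1), gapWeight (l.getD (k + 1) 0 - l.getD k 0)
  | [] | [_] => by simp
  | a :: b :: l => by
    rw [gapSum_cons_cons, gapSum_eq_sum_range (b :: l)]
    simp [Finset.sum_range_succ', add_comm]

lemma le_of_mem_append_singleton {l : List ℝ} {q x : ℝ} (hl : (l ++ [q]).Pairwise (· < ·))
    (hx : x ∈ l ++ [q]) : x ≤ q := by
  rcases List.mem_append.mp hx with hx | hx
  · exact ((List.pairwise_append.mp hl).2.2 x hx q List.mem_cons_self).le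
  · exact (List.mem_singleton.mp hx).le

/-- The term `(y - c) / 2` accounts for the part `[c, y]` of the left cluster already passed,
which makes the statement inductive. -/
lemma half_add_gapSum_le_of_near_ends {c q ε : ℝ} :
    ∀ {y : ℝ} {l : List ℝ}, (y :: (l ++ [q])).Pairwise (· < ·) → c ≤ y → y - c ≤ ε →
      (∀ x ∈ l, x - c ≤ ε ∨ q - x ≤ ε) →
      (y - c) / 2 + gapSum (y :: (l ++ [q])) ≤ (1 + ε) * gapWeight (q - c)
  | y, [], hl, hcy, hyε, _ => by
    have hyq := List.rel_of_pairwise_cons hl List.mem_cons_self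
    have := add_gapWeight_sub_le (s := (y - c) / 2) (h := q - c) (ε := ε) (by linarith)
      (by linarith) (by linarith)
    rw [show q - c - 2 * ((y - c) / 2) = q - y by ring] at this
    simpa using this
  | y, z :: l, hl, hcy, hyε, hnear => by
    have hyz := List.rel_of_pairwise_cons hl List.mem_cons_self
    rw [List.cons_append, gapSum_cons_cons]
    rcases hnear z List.mem_cons_self with hz | hz
    · have ih := half_add_gapSum_le_of_near_ends hl.of_cons (by linarith) hz
        fun x hx => hnear x (List.mem_cons_of_mem z hx)
      linarith [gapWeight_le_half (sub_nonneg.mpr hyz.le)]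
    · have hzl := hl.of_cons
      have hrest : gapSum (z :: (l ++ [q])) ≤ (q - z) / 2 :=
        gapSum_cons_le_half hzl fun x hx =>
          le_of_mem_append_singleton (l := z :: l) hzl (by simpa using hx)
      have hzq : z ≤ q := le_of_mem_append_singleton (l := z :: l) hzl (by simp)
      have := add_gapWeight_sub_le (s := ((y - c) + (q - z)) / 2) (h := q - c) (ε := ε)
        (by linarith) (by linarith) (by linarith)
      rw [show q - c - 2 * (((y - c) + (q - z)) / 2) = z - y by ring] at this
      linarith

lemma List.exists_eq_append_cons_of_cons_sublist {α : Type*} {a : α} {l l' : List α}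
    (h : (a :: l).Sublist l') : ∃ P Q, l' = P ++ a :: Q ∧ l.Sublist Q := by
  obtain ⟨r₁, r₂, rfl, ha, hl⟩ := List.cons_sublist_iff.mp h
  obtain ⟨P, P', rfl⟩ := List.append_of_mem ha
  exact ⟨P, P' ++ r₂, by simp, hl.trans (List.sublist_append_right _ _)⟩

/-- The `ε / 2` pays for the points of `H` beyond the last point of `G`. -/
lemma gapSum_cons_le_of_approx {ε : ℝ} (hε : 0 ≤ ε) :
    ∀ {y : ℝ} {G H : List ℝ}, (y :: H).Pairwise (· < ·) → G.Sublist H →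
      (∀ x ∈ H, ∃ u ∈ y :: G, |x - u| ≤ ε) →
      gapSum (y :: H) ≤ ε / 2 + (1 + ε) * gapSum (y :: G)
  | y, [], H, hH, _, happ => by
    have hM : ∀ x ∈ y :: H, x ≤ y + ε := by
      intro x hx
      rcases List.mem_cons.mp hx with rfl | hx
      · linarith
      · obtain ⟨u, hu, hxu⟩ := happ x hx
        rw [List.mem_singleton.mp hu] at hxu
        linarith [le_abs_self (x - y)]
    have := gapSum_cons_le_half hH hM
    simp only [gapSum_singleton, mul_zero, add_zero]
    linarith
  | y, y₁ :: G, H, hH, hGH, happ => by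
    obtain ⟨P, Q, rfl, hGQ⟩ := List.exists_eq_append_cons_of_cons_sublist hGH
    have hPQ := List.pairwise_append.mp hH.of_cons
    have hyy₁ : y < y₁ := List.rel_of_pairwise_cons hH (by simp)
    have hy₁_le : ∀ u ∈ y₁ :: G, y₁ ≤ u := fun u hu => by
      rcases List.mem_cons.mp ((hGQ.cons_cons y₁).subset hu) with rfl | hu
      · exact le_rfl
      · exact (List.rel_of_pairwise_cons hPQ.2.1 hu).le
    have hleft : gapSum (y :: (P ++ [y₁])) ≤ (1 + ε) * gapWeight (y₁ - y) := by
      simpa using half_add_gapSum_le_of_near_ends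
        (hH.sublist (.cons_cons _ (.append_left (.cons_cons _ (List.nil_sublist _)) _))) le_rfl
        (by linarith) fun x hx => by
          obtain ⟨u, hu, hxu⟩ := happ x (List.mem_append_left _ hx)
          rcases List.mem_cons.mp hu with rfl | hu
          · exact .inl ((le_abs_self _).trans hxu)
          · exact .inr (by linarith [hy₁_le u hu, neg_abs_le (x - u)])
    have hright := gapSum_cons_le_of_approx hε hPQ.2.1 hGQ fun x hx => by
      obtain ⟨u, hu, hxu⟩ := happ x (by simp [hx])
      rcases List.mem_cons.mp hu with rfl | hu
      · have hy₁x : y₁ < x := List.rel_of_pairwise_cons hPQ.2.1 hx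
        exact ⟨y₁, List.mem_cons_self, abs_le.mpr
          ⟨by linarith, by linarith [le_abs_self (x - u)]⟩⟩
      · exact ⟨u, hu, hxu⟩
    rw [← List.cons_append, gapSum_append_cons, gapSum_cons_cons]
    simp only [List.cons_append] at hleft ⊢
    linarith

lemma gapSum_le_of_approx {ε : ℝ} (hε : 0 ≤ ε) {G H : List ℝ} (hH : H.Pairwise (· < ·))
    (hGH : G.Sublist H) (hG : G ≠ []) (happ : ∀ x ∈ H, ∃ u ∈ G, |x - u| ≤ ε) :
    gapSum H ≤ ε + (1 + ε) * gapSum G := by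
  obtain ⟨y, G, rfl⟩ := List.exists_cons_of_ne_nil hG
  obtain ⟨P, Q, rfl, hGQ⟩ := List.exists_eq_append_cons_of_cons_sublist hGH
  have hPQ := List.pairwise_append.mp hH
  have hleft : gapSum (P ++ [y]) ≤ ε / 2 := by
    cases P with
    | nil => simp only [List.nil_append, gapSum_singleton]; positivity
    | cons p P =>
      have hp : y - p ≤ ε := by
        obtain ⟨u, hu, hpu⟩ := happ p (by simp)
        have : y ≤ u := by
          rcases List.mem_cons.mp hu with rfl | hu
          · exact le_rfl
          · exact ((List.pairwise_cons.mp hPQ.2.1).1 u (hGQ.subset hu)).le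
        linarith [neg_abs_le (p - u)]
      have hsorted : ((p :: P) ++ [y]).Pairwise (· < ·) :=
        hH.sublist (.append_left (.cons_cons _ (List.nil_sublist _)) _)
      have := gapSum_cons_le_half hsorted fun x hx => le_of_mem_append_singleton hsorted hx
      simpa using this.trans (by linarith)
  have hright := gapSum_cons_le_of_approx hε hPQ.2.1 hGQ fun x hx =>
    happ x (List.mem_append_right _ (List.mem_cons_of_mem _ hx))
  rw [gapSum_append_cons]
  linarith

section LinearAlgebra

open Matrix

lemma Matrix.sum_inv_mul_diagonal_mul_transpose {K ι : Type*} [Field K] [Fintype ι]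
    [DecidableEq ι] {L : Matrix ι ι K} {d v : ι → K} (hL : IsUnit L.det) (hd : ∀ k, d k ≠ 0)
    (hv : L *ᵥ v = 1) :
    ∑ i, ∑ j, (L * diagonal d * Lᵀ)⁻¹ i j = ∑ k, v k ^ 2 / d k := by
  have hLt : IsUnit Lᵀ.det := by rwa [det_transpose]
  set w : ι → K := fun k => v k / d k
  have hdw : diagonal d *ᵥ w = v := by
    ext k
    simp [w, mulVec_diagonal, mul_div_cancel₀ _ (hd k)]
  have hM : IsUnit (L * diagonal d * Lᵀ).det := by
    simp only [det_mul, det_diagonal]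
    exact (hL.mul (isUnit_iff_ne_zero.mpr (Finset.prod_ne_zero_iff.mpr fun k _ => hd k))).mul hLt
  have hsol : (L * diagonal d * Lᵀ)⁻¹ *ᵥ 1 = Lᵀ⁻¹ *ᵥ w := by
    have : (L * diagonal d * Lᵀ) *ᵥ (Lᵀ⁻¹ *ᵥ w) = 1 := by
      rw [← hv, ← hdw, mulVec_mulVec, Matrix.mul_assoc, mul_nonsing_inv _ hLt, Matrix.mul_one,
        mulVec_mulVec]
    rw [← this, mulVec_mulVec, nonsing_inv_mul _ hM, one_mulVec]
  calc ∑ i, ∑ j, (L * diagonal d * Lᵀ)⁻¹ i j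
      = 1 ⬝ᵥ ((L * diagonal d * Lᵀ)⁻¹ *ᵥ 1) := by simp [dotProduct, mulVec]
    _ = v ⬝ᵥ w := by
      rw [hsol, ← hv, ← vecMul_transpose, dotProduct_mulVec, vecMul_vecMul,
        mul_nonsing_inv _ hLt, vecMul_one]
    _ = ∑ k, v k ^ 2 / d k := by simp only [dotProduct, w]; congr 1; ext k; ring

lemma Matrix.sum_inv_submatrix_equiv {R m n : Type*} [CommRing R] [Fintype m] [Fintype n]
    [DecidableEq m] [DecidableEq n] (A : Matrix m m R) (e : n ≃ m) :
    ∑ i, ∑ j, (A.submatrix e e)⁻¹ i j = ∑ i, ∑ j, A⁻¹ i j := by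
  simp only [inv_submatrix_equiv, submatrix_apply]
  rw [← e.sum_comp]
  exact Finset.sum_congr rfl fun i _ => e.sum_comp (A⁻¹ (e i))

end LinearAlgebra

lemma Fin.sum_ite_le_eq_sum_range {M : Type*} [AddCommMonoid M] {n : ℕ} (f : ℕ → M) (i : Fin n) :
    ∑ j : Fin n, (if j ≤ i then f j else 0) = ∑ j ∈ Finset.range (i + 1), f j := by
  simp only [Fin.le_def]
  rw [Fin.sum_univ_eq_sum_range (fun j => if j ≤ (i : ℕ) then f j else 0), ← Finset.sum_filter]
  congr 1
  ext j
  simp only [Finset.mem_filter, Finset.mem_range]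
  omega

section ExpSimMatrix

open Matrix Finset

variable (x : ℕ → ℝ) (n : ℕ)

/-- `rₖ`; setting `r₀ = 0` makes the telescoping sums start at `x₀`. -/
noncomputable def backRatio (k : ℕ) : ℝ := if k = 0 then 0 else exp (x (k - 1) - x k)

noncomputable def expSimMatrix : Matrix (Fin n) (Fin n) ℝ :=
  of fun i j => exp (-|x i - x j|)

noncomputable def expLower : Matrix (Fin n) (Fin n) ℝ :=
  of fun i j => if j ≤ i then exp (x j - x i) else 0

lemma sum_range_exp_mul_one_sub_backRatio_pow {m : ℕ} (hm : m ≠ 0) (i : ℕ) :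
    ∑ k ∈ range (i + 1), exp (m * x k) * (1 - backRatio x k ^ m) = exp (m * x i) := by
  induction i with
  | zero => simp [backRatio, hm]
  | succ i ih =>
    rw [sum_range_succ, ih, backRatio, if_neg i.succ_ne_zero, Nat.add_sub_cancel, ← exp_nat_mul,
      mul_sub, mul_one, ← exp_add]
    ring_nf

lemma expLower_mulVec : expLower x n *ᵥ (fun k : Fin n => 1 - backRatio x k) = 1 := by
  ext i
  have := sum_range_exp_mul_one_sub_backRatio_pow x one_ne_zero i
  simp only [Nat.cast_one, one_mul, pow_one] at this
  simp only [mulVec, dotProduct, expLower, of_apply, ite_mul, zero_mul, Pi.one_apply]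
  rw [Fin.sum_ite_le_eq_sum_range (fun j => exp (x j - x i) * (1 - backRatio x j))]
  calc ∑ j ∈ range (i + 1), exp (x j - x i) * (1 - backRatio x j)
      = exp (-x i) * ∑ j ∈ range (i + 1), exp (x j) * (1 - backRatio x j) := by
        rw [mul_sum]
        refine sum_congr rfl fun j _ => ?_
        rw [sub_eq_neg_add, exp_add]
        ring
    _ = 1 := by rw [this, ← exp_add, neg_add_cancel, exp_zero]

lemma det_expLower : (expLower x n).det = 1 := by
  rw [det_of_isLowerTriangular _ fun i j (hij : OrderDual.toDual j < OrderDual.toDual i) => by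
    simp [expLower, not_le.mpr (OrderDual.toDual_lt_toDual.mp hij)]]
  simp [expLower]

lemma expLower_mul_diagonal_mul_transpose (hx : MonotoneOn x (Set.Iio n)) :
    expLower x n * diagonal (fun k : Fin n => 1 - backRatio x k ^ 2) * (expLower x n)ᵀ =
      expSimMatrix x n := by
  ext i j
  have := sum_range_exp_mul_one_sub_backRatio_pow x two_ne_zero (min i j : Fin n)
  have hprod : ∀ k : Fin n, expLower x n i k * (1 - backRatio x k ^ 2) * expLower x n j k =
      if k ≤ min i j then
        exp (-x i - x j) * (exp (2 * x k) * (1 - backRatio x k ^ 2)) else 0 := by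
    intro k
    have e : exp (x k - x i) * exp (x k - x j) = exp (-x i - x j) * exp (2 * x k) := by
      rw [← exp_add, ← exp_add]
      ring_nf
    by_cases hi : k ≤ i <;> by_cases hj : k ≤ j <;>
      simp only [expLower, of_apply, le_min_iff, hi, hj, and_self, and_false, false_and,
        if_true, if_false, mul_zero, zero_mul]
    linear_combination (1 - backRatio x k ^ 2) * e
  simp only [mul_apply, diagonal_apply, transpose_apply, mul_ite, mul_zero, sum_ite_eq',
    mem_univ, if_true, hprod]
  rw [Fin.sum_ite_le_eq_sum_range
    (fun k => exp (-x i - x j) * (exp (2 * x k) * (1 - backRatio x k ^ 2))), ← mul_sum]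
  simp only [Nat.cast_ofNat] at this
  rw [this, ← exp_add]
  simp only [expSimMatrix, of_apply]
  congr 1
  rcases le_total i j with h | h
  · have := hx (Fin.is_lt i) (Fin.is_lt j) h
    rw [min_eq_left h, abs_of_nonpos (by linarith)]
    ring
  · have := hx (Fin.is_lt j) (Fin.is_lt i) h
    rw [min_eq_right h, abs_of_nonneg (by linarith)]
    ring

lemma backRatio_nonneg (k : ℕ) : 0 ≤ backRatio x k := by
  unfold backRatio
  split_ifs <;> positivity

lemma backRatio_lt_one (hx : StrictMonoOn x (Set.Iio n)) {k : ℕ} (hk : k < n) :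
    backRatio x k < 1 := by
  unfold backRatio
  split_ifs with h
  · exact one_pos
  · have : x (k - 1) < x k := hx (by simp only [Set.mem_Iio]; omega) hk (by omega)
    rwa [exp_lt_one_iff, sub_neg]

theorem sum_inv_expSimMatrix {m : ℕ} (hx : StrictMonoOn x (Set.Iio (m + 1))) :
    ∑ i, ∑ j, (expSimMatrix x (m + 1))⁻¹ i j =
      1 + ∑ k ∈ range m, gapWeight (x (k + 1) - x k) := by
  have hr1 : ∀ k : Fin (m + 1), backRatio x k < 1 := fun k => backRatio_lt_one x _ hx k.is_lt
  rw [← expLower_mul_diagonal_mul_transpose x _ hx.monotoneOn,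
    sum_inv_mul_diagonal_mul_transpose (by simp [det_expLower])
      (fun k => by nlinarith [backRatio_nonneg x k, hr1 k]) (expLower_mulVec x _),
    Fin.sum_univ_eq_sum_range (fun k => (1 - backRatio x k) ^ 2 / (1 - backRatio x k ^ 2)),
    sum_range_succ', add_comm]
  congr 1
  · simp [backRatio]
  · refine sum_congr rfl fun k hk => ?_
    have h1 : backRatio x (k + 1) < 1 := backRatio_lt_one x _ hx (by simp at hk ⊢; omega)
    have h0 := backRatio_nonneg x (k + 1)
    have hq : 1 - backRatio x (k + 1) ^ 2 ≠ 0 := by nlinarith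
    rw [gapWeight, neg_sub, div_eq_div_iff hq (by positivity)]
    unfold backRatio
    rw [if_neg k.succ_ne_zero, Nat.add_sub_cancel]
    ring

end ExpSimMatrix

lemma finMag_empty {X : Type*} [MetricSpace X] : finMag (∅ : Finset X) = 0 := by
  simp [finMag]

section SubsetsOfReal

variable {p : Set ℝ}

noncomputable def sortedCoords (s : Finset p) : List ℝ := s.sort.map (↑)

lemma pairwise_sortedCoords (s : Finset p) : (sortedCoords s).Pairwise (· < ·) :=
  (s.sortedLT_sort.pairwise).map _ fun _ _ h => h

lemma mem_sortedCoords {s : Finset p} {x : ℝ} : x ∈ sortedCoords s ↔ ∃ u ∈ s, (u : ℝ) = x := by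
  simp [sortedCoords]

lemma sortedCoords_sublist {s t : Finset p} (h : s ⊆ t) :
    (sortedCoords s).Sublist (sortedCoords t) :=
  (List.sublist_of_subperm_of_pairwise
    (List.subperm_of_subset (s.sort_nodup _) fun _ hu =>
      (t.mem_sort _).mpr (h ((s.mem_sort _).mp hu)))
    s.sortedLT_sort.pairwise t.sortedLT_sort.pairwise).map _

lemma sortedCoords_ne_nil {s : Finset p} (hs : s.Nonempty) : sortedCoords s ≠ [] := by
  obtain ⟨u, hu⟩ := hs
  exact List.ne_nil_of_mem (mem_sortedCoords.mpr ⟨u, hu, rfl⟩)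

theorem sum_inv_simMatrix [DecidableEq p] {s : Finset p} (hs : s.Nonempty) :
    ∑ i, ∑ j, (simMatrix s)⁻¹ i j = 1 + gapSum (sortedCoords s) := by
  obtain ⟨m, hm⟩ : ∃ m, s.card = m + 1 := Nat.exists_eq_add_one.mpr hs.card_pos
  set x : ℕ → ℝ := fun k => (sortedCoords s).getD k 0
  let e : Fin (m + 1) ≃ s := (s.orderIsoOfFin hm).toEquiv
  have he : ∀ i, ((e i : p) : ℝ) = x i := fun i => by
    show _ = (sortedCoords s).getD i 0
    rw [List.getD_eq_getElem?_getD, List.getElem?_eq_getElem (by simp [sortedCoords, hm, i.is_lt]),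
      Option.getD_some]
    simp [e, sortedCoords, Finset.orderEmbOfFin_apply]
  have hx : StrictMonoOn x (Set.Iio (m + 1)) := fun i hi j hj hij => by
    rw [← he ⟨i, hi⟩, ← he ⟨j, hj⟩]
    exact (s.orderIsoOfFin hm).strictMono (Fin.mk_lt_mk.mpr hij)
  have hsub : (simMatrix s).submatrix e e = expSimMatrix x (m + 1) := by
    ext i j
    simp [simMatrix, expSimMatrix, Subtype.dist_eq, Real.dist_eq, he]
  refine (Matrix.sum_inv_submatrix_equiv (simMatrix s) e).symm.trans ?_
  rw [hsub, sum_inv_expSimMatrix x hx, gapSum_eq_sum_range]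
  simp [sortedCoords, hm, x]

theorem finMag_eq_one_add_gapSum {s : Finset p} (hs : s.Nonempty) :
    finMag s = 1 + gapSum (sortedCoords s) :=
  @sum_inv_simMatrix p (Classical.decEq p) s hs

lemma finMag_nonneg (s : Finset p) : 0 ≤ finMag s := by
  rcases s.eq_empty_or_nonempty with rfl | hs
  · rw [finMag_empty]
  · rw [finMag_eq_one_add_gapSum hs]
    linarith [gapSum_nonneg (pairwise_sortedCoords s)]

lemma finMag_mono {s t : Finset p} (h : s ⊆ t) : finMag s ≤ finMag t := by
  rcases s.eq_empty_or_nonempty with rfl | hs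
  · rw [finMag_empty]
    exact finMag_nonneg t
  · rw [finMag_eq_one_add_gapSum hs, finMag_eq_one_add_gapSum (hs.mono h)]
    linarith [gapSum_le_of_sublist (sortedCoords_sublist h) (pairwise_sortedCoords t)]

theorem finMag_le_one_add_mul_finMag {s t : Finset p} {ε : ℝ} (hε : 0 ≤ ε) (hts : t ⊆ s)
    (ht : t.Nonempty) (happ : ∀ x ∈ s, ∃ y ∈ t, dist x y ≤ ε) :
    finMag s ≤ (1 + ε) * finMag t := by
  have := gapSum_le_of_approx hε (pairwise_sortedCoords s) (sortedCoords_sublist hts)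
    (sortedCoords_ne_nil ht) fun x hx => by
      obtain ⟨u, hu, rfl⟩ := mem_sortedCoords.mp hx
      obtain ⟨v, hv, huv⟩ := happ u hu
      exact ⟨v, mem_sortedCoords.mpr ⟨v, hv, rfl⟩, huv⟩
  rw [finMag_eq_one_add_gapSum (ht.mono hts), finMag_eq_one_add_gapSum ht]
  linarith

end SubsetsOfReal

lemma finMag_Icc_le {a b : ℝ} (hab : a ≤ b) (s : Finset (Set.Icc a b)) :
    finMag s ≤ 1 + (b - a) / 2 := by
  rcases s.eq_empty_or_nonempty with rfl | hs
  · rw [finMag_empty]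
    linarith
  rw [finMag_eq_one_add_gapSum hs]
  obtain ⟨c, l, hcl⟩ := List.exists_cons_of_ne_nil (sortedCoords_ne_nil hs)
  have hmem : ∀ x ∈ c :: l, x ∈ Set.Icc a b := fun x hx => by
    obtain ⟨u, -, rfl⟩ := mem_sortedCoords.mp (hcl ▸ hx)
    exact u.2
  have := gapSum_cons_le_half (hcl ▸ pairwise_sortedCoords s) fun x hx => (hmem x hx).2
  rw [hcl]
  linarith [(hmem c List.mem_cons_self).1]

section CompactSets

variable {X : Type*} [MetricSpace X]

lemma finMag_le_cMag {K : Set X} (hK : cMagE K ≠ ⊤) {s : Finset X} (hs : (s : Set X) ⊆ K) :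
    finMag s ≤ cMag K :=
  (ENNReal.ofReal_le_iff_le_toReal hK).mp (le_iSup₂_of_le s hs le_rfl)

lemma cMag_le {K : Set X} {c : ℝ} (hc : 0 ≤ c)
    (h : ∀ s : Finset X, (s : Set X) ⊆ K → finMag s ≤ c) : cMag K ≤ c :=
  ENNReal.toReal_le_of_le_ofReal hc (iSup₂_le fun s hs => ENNReal.ofReal_le_ofReal (h s hs))

lemma NonemptyCompacts.exists_dist_le_dist (K L : NonemptyCompacts X) {x : X} (hx : x ∈ K) :
    ∃ y ∈ L, dist x y ≤ dist K L := by
  obtain ⟨y, hy, hxy⟩ := L.isCompact.exists_infDist_eq_dist L.nonempty x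
  exact ⟨y, hy, hxy ▸ Metric.infDist_le_hausdorffDist_of_mem hx (edist_ne_top K L)⟩

end CompactSets

section Icc

variable {a b : ℝ}

lemma cMagE_ne_top (hab : a ≤ b) (K : Set (Set.Icc a b)) : cMagE K ≠ ⊤ :=
  ne_top_of_le_ne_top ENNReal.ofReal_ne_top
    (iSup₂_le fun s _ => ENNReal.ofReal_le_ofReal (finMag_Icc_le hab s))

theorem cMag_le_cMag_add (hab : a ≤ b) (K L : NonemptyCompacts (Set.Icc a b)) :
    cMag (K : Set (Set.Icc a b)) ≤ cMag (L : Set (Set.Icc a b)) + (1 + (b - a) / 2) * dist K L := by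
  set ε := dist K L
  have hε : 0 ≤ ε := dist_nonneg
  have h0 : 0 ≤ cMag (L : Set (Set.Icc a b)) + (1 + (b - a) / 2) * ε :=
    add_nonneg ENNReal.toReal_nonneg (mul_nonneg (by linarith) hε)
  refine cMag_le h0 fun F hF => ?_
  rcases F.eq_empty_or_nonempty with rfl | hFne
  · rwa [finMag_empty]
  choose! f hfL hf using fun x (hx : x ∈ (K : Set (Set.Icc a b))) =>
    NonemptyCompacts.exists_dist_le_dist K L hx
  have hGL : ((F.image f : Finset _) : Set (Set.Icc a b)) ⊆ L := by
    rw [Finset.coe_image]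
    exact Set.image_subset_iff.mpr fun x hx => hfL x (hF hx)
  have happ : ∀ x ∈ F ∪ F.image f, ∃ y ∈ F.image f, dist x y ≤ ε := by
    intro x hx
    rcases Finset.mem_union.mp hx with hx | hx
    · exact ⟨f x, Finset.mem_image_of_mem f hx, hf x (hF hx)⟩
    · exact ⟨x, hx, by simpa using hε⟩
  calc finMag F ≤ finMag (F ∪ F.image f) := finMag_mono Finset.subset_union_left
    _ ≤ (1 + ε) * finMag (F.image f) :=
      finMag_le_one_add_mul_finMag hε Finset.subset_union_right (hFne.image f) happ
    _ ≤ cMag (L : Set (Set.Icc a b)) + ε * (1 + (b - a) / 2) := by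
      rw [add_mul, one_mul]
      exact add_le_add (finMag_le_cMag (cMagE_ne_top hab _) hGL)
        (mul_le_mul_of_nonneg_left (finMag_Icc_le hab _) hε)
    _ = _ := by ring

end Icc

/-- For `a < b`, the magnitude maps on nonempty compact subsets and on
nonempty finite subsets of `[a, b]` (with the Hausdorff metric) are Lipschitz with
constant `1 + (b − a)/2`. -/
theorem stmt_19 (a b : ℝ) (hab : a < b) :
    LipschitzWith (Real.toNNReal (1 + (b - a) / 2))
      (fun K : NonemptyCompacts (Set.Icc a b) => cMag (K : Set (Set.Icc a b))) ∧
    LipschitzWith (Real.toNNReal (1 + (b - a) / 2))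
      (fun F : {K : NonemptyCompacts (Set.Icc a b) // (K : Set (Set.Icc a b)).Finite} =>
        cMag ((F : NonemptyCompacts (Set.Icc a b)) : Set (Set.Icc a b))) := by
  have hK := LipschitzWith.of_le_add_mul' _ (cMag_le_cMag_add hab.le)
  exact ⟨hK, mul_one (Real.toNNReal _) ▸ hK.comp (LipschitzWith.subtype_val _)⟩
end
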